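/- arXiv:2501.09331 — 2 statements merged into one kernel-verified Lean document; each statement's English description precedes it below -/
import Mathlib

section
/- Let L and K be natural numbers with 1 ≤ K ≤ L, and let M ⊆ Fin L be a set of exactly K 'mismatch' positions. For a uniformly random permutation σ of Fin L, let T(σ) be the least i ≥ 1 with σ(i−1) ∈ M. Then for every i with 1 ≤ i ≤ L−K, P(T = i) = ((L−K)!/L!) · ( (L−i+1)!/(L−K−i+1)! − (L−i)!/(L−K−i)! ). -/
/-!
For nonempty `M`, `T σ > n` says exactly that `σ` sends the first `n` positions outside `M`.
Such a permutation is an injective choice of those `n` images among the `L - K` matching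
positions followed by an arbitrary bijection of the remaining `L - n` positions, so there are
`(L - K)!/(L - K - n)! · (L - n)!` of them. The formula is `P(T > i - 1) - P(T > i)`.
-/

open Finset
open scoped Classical

/-- The number of comparisons until falsification: the least `i ≥ 1` such that the
`(i-1)`-th compared position `σ (i-1)` is a mismatch position (a member of `M`). -/
noncomputable def falsificationTime {L : ℕ} (M : Finset (Fin L)) (σ : Equiv.Perm (Fin L)) : ℕ :=
  sInf {i : ℕ | 1 ≤ i ∧ ∃ h : i - 1 < L, σ ⟨i - 1, h⟩ ∈ M}

open Function Nat

section Embeddings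

variable {α β γ : Type*} [Fintype α] [Fintype β] [Fintype γ] [DecidableEq γ]

theorem card_embedding_filter_forall_mem (t : Finset γ) :
    #{f : α ↪ γ | ∀ a, f a ∈ t} = (#t).descFactorial (Fintype.card α) := by
  simp_rw [← Finset.mem_coe]
  rw [← Fintype.card_subtype, Fintype.card_congr (Equiv.codRestrict α (t : Set γ)),
    Fintype.card_embedding_eq]
  simp

theorem card_sum_embedding_filter_inl (p : (α ↪ γ) → Prop) [DecidablePred p] :
    #{g : α ⊕ β ↪ γ | p (Embedding.inl.trans g)} =
      #{f : α ↪ γ | p f} * (Fintype.card γ - Fintype.card α).descFactorial (Fintype.card β) := by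
  let e : {g : α ⊕ β ↪ γ // p (Embedding.inl.trans g)} ≃
      Σ f : {f : α ↪ γ // p f}, β ↪ ↥(Set.range (f : α ↪ γ))ᶜ :=
    (Equiv.sumEmbeddingEquivSigmaEmbeddingRestricted.subtypeEquiv fun _ => Iff.rfl).trans
      (Equiv.subtypeSigmaEquiv _ _)
  rw [← Fintype.card_subtype, ← Fintype.card_subtype, Fintype.card_congr e, Fintype.card_sigma]
  simp_rw [Fintype.card_embedding_eq, Fintype.card_compl_set,
    Set.card_range_of_injective (Embedding.injective _)]
  rw [sum_const, Finset.card_univ, smul_eq_mul]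

end Embeddings

theorem card_perm_filter_forall_mem {α : Type*} [Fintype α] [DecidableEq α] (s t : Finset α) :
    #{σ : Equiv.Perm α | ∀ a ∈ s, σ a ∈ t} = (#t).descFactorial #s * (Fintype.card α - #s)! := by
  let e : Equiv.Perm α ≃ ({a // a ∈ s} ⊕ {a // a ∉ s} ↪ α) :=
    (Equiv.embeddingEquivOfFinite α).symm.trans
      (Equiv.embeddingCongr (Equiv.sumCompl _).symm (Equiv.refl α))
  have he : {σ : Equiv.Perm α // ∀ a ∈ s, σ a ∈ t} ≃
      {g : {a // a ∈ s} ⊕ {a // a ∉ s} ↪ α // ∀ a, Embedding.inl.trans g a ∈ t} :=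
    e.subtypeEquiv fun σ => by simp [e]
  have hcard := card_sum_embedding_filter_inl (β := {a // a ∉ s}) (fun f : s ↪ α => ∀ a, f a ∈ t)
  rw [← Fintype.card_subtype, Fintype.card_congr he, Fintype.card_subtype, hcard,
    card_embedding_filter_forall_mem]
  simp [Fintype.card_subtype_compl, descFactorial_self]

theorem lt_falsificationTime_iff {L : ℕ} {M : Finset (Fin L)} (hM : M.Nonempty)
    (σ : Equiv.Perm (Fin L)) (n : ℕ) :
    n < falsificationTime M σ ↔ ∀ j : Fin L, (j : ℕ) < n → σ j ∉ M := by
  obtain ⟨x, hx⟩ := hM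
  have hS : {m : ℕ | 1 ≤ m ∧ ∃ h : m - 1 < L, σ ⟨m - 1, h⟩ ∈ M}.Nonempty :=
    ⟨σ.symm x + 1, by omega, by simp, by simpa using hx⟩
  rw [falsificationTime, Nat.lt_iff_add_one_le, le_csInf_iff' hS]
  constructor
  · intro h j hj hjM
    have := @h (j + 1) ⟨by omega, by simp, by simpa using hjM⟩
    omega
  · rintro h m ⟨hm1, hmL, hmM⟩
    by_contra hlt
    exact h ⟨m - 1, hmL⟩ (by simp only; omega) hmM

theorem card_lt_falsificationTime {L : ℕ} {M : Finset (Fin L)} (hM : M.Nonempty) {n : ℕ}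
    (hn : n ≤ L) :
    #{σ : Equiv.Perm (Fin L) | n < falsificationTime M σ} = (L - #M).descFactorial n * (L - n)! := by
  have hs : #{j : Fin L | (j : ℕ) < n} = n := by rw [Fin.card_filter_val_lt]; omega
  have key := card_perm_filter_forall_mem ({j | (j : ℕ) < n} : Finset (Fin L)) Mᶜ
  rw [hs, card_compl, Fintype.card_fin] at key
  rw [← key]
  congr 1
  ext σ
  simp [lt_falsificationTime_iff hM]

theorem card_filter_eq_succ_add_card_filter_succ_lt {X : Type*} [Fintype X] (T : X → ℕ) (n : ℕ) :
    #{x | T x = n + 1} + #{x | n + 1 < T x} = #{x | n < T x} := by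
  rw [← card_union_of_disjoint (disjoint_filter.2 fun x _ h => by omega), ← filter_or]
  congr 1
  ext x
  simp only [mem_filter, mem_univ, true_and]
  omega

theorem cast_descFactorial_eq_div {𝕜 : Type*} [Field 𝕜] [CharZero 𝕜] {n k : ℕ} (h : k ≤ n) :
    (n.descFactorial k : 𝕜) = n ! / (n - k)! := by
  rw [eq_div_iff (Nat.cast_ne_zero.2 (factorial_ne_zero _)), mul_comm]
  exact_mod_cast factorial_mul_descFactorial h

theorem stmt_1_general (L K : ℕ) (hK1 : 1 ≤ K)
    (M : Finset (Fin L)) (hM : M.card = K)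
    (i : ℕ) (hi1 : 1 ≤ i) (hi : i ≤ L - K) :
    ((Finset.univ.filter (fun σ : Equiv.Perm (Fin L) =>
        falsificationTime M σ = i)).card : ℝ) / (Nat.factorial L : ℝ)
      = ((Nat.factorial (L - K) : ℝ) / (Nat.factorial L : ℝ))
        * ((Nat.factorial (L - i + 1) : ℝ) / (Nat.factorial (L - K - i + 1) : ℝ)
          - (Nat.factorial (L - i) : ℝ) / (Nat.factorial (L - K - i) : ℝ)) := by
  have hne : M.Nonempty := card_pos.1 (by omega)
  obtain ⟨n, rfl⟩ : ∃ n, i = n + 1 := ⟨i - 1, by omega⟩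
  have hsplit := card_filter_eq_succ_add_card_filter_succ_lt (falsificationTime M) n
  rw [card_lt_falsificationTime hne (by omega), card_lt_falsificationTime hne (by omega), hM]
    at hsplit
  have hcount : (#{σ : Equiv.Perm (Fin L) | falsificationTime M σ = n + 1} : ℝ) =
      (L - K).descFactorial n * (L - n)! - (L - K).descFactorial (n + 1) * (L - (n + 1))! := by
    rw [eq_sub_iff_add_eq]; exact_mod_cast hsplit
  rw [hcount, cast_descFactorial_eq_div (by omega), cast_descFactorial_eq_div (by omega),
    show L - (n + 1) + 1 = L - n by omega, show L - K - (n + 1) + 1 = L - K - n by omega]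
  field_simp

theorem stmt_1 (L K : ℕ) (hK1 : 1 ≤ K) (hKL : K ≤ L)
    (M : Finset (Fin L)) (hM : M.card = K)
    (i : ℕ) (hi1 : 1 ≤ i) (hi : i ≤ L - K) :
    ((Finset.univ.filter (fun σ : Equiv.Perm (Fin L) =>
        falsificationTime M σ = i)).card : ℝ) / (Nat.factorial L : ℝ)
      = ((Nat.factorial (L - K) : ℝ) / (Nat.factorial L : ℝ))
        * ((Nat.factorial (L - i + 1) : ℝ) / (Nat.factorial (L - K - i + 1) : ℝ)
          - (Nat.factorial (L - i) : ℝ) / (Nat.factorial (L - K - i) : ℝ)) :=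
  stmt_1_general L K hK1 M hM i hi1 hi
end

section
/- Let L ≥ 1 be a natural number and let p, q ∈ [0,1] with p ≠ q. For each bit string θ : Fin L → Bool, let μ_θ be the product probability measure on ℕ → Bool (with the product σ-algebra) whose n-th coordinate is Bernoulli with success probability p if θ(n mod L) = true and q otherwise. Then there exists a measurable function D : (ℕ → Bool) → (Fin L → Bool) such that for every θ : Fin L → Bool, μ_θ{ ω : D(ω) = θ } = 1. That is, the finite information of θ, spread over the infinite observation sequence by encoding each bit of θ as a distinct Bernoulli distribution used cyclically, is almost surely recoverable from the observations. -/
/-!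
Under `μ θ` the observations at the times `j, j + L, j + 2L, …` are i.i.d. Bernoulli with
parameter `p` or `q` according to `θ j`, so by the strong law of large numbers their running
frequency of ones converges almost surely to that parameter. Since `p ≠ q`, the decoder that sets
bit `j` to `true` exactly when this frequency tends to `p` is correct almost surely, for all `L`
bits at once. To use the independence, `μ θ` is identified with the product measure
`Measure.infinitePi`: both are finite measures agreeing on the π-system of initial cylinders,
which generates the product σ-algebra.
-/

open MeasureTheory Measure Filter ProbabilityTheory Topology unitInterval

namespace MeasureTheory

variable {α : Type*}

def initialCylinders (α : Type*) : Set (Set (ℕ → α)) :=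
  {S | ∃ (n : ℕ) (b : Fin n → α), S = {ω | ∀ i : Fin n, ω i = b i}}

theorem isPiSystem_initialCylinders : IsPiSystem (initialCylinders α) := by
  suffices key : ∀ n m (b : Fin n → α) (c : Fin m → α), n ≤ m →
      ({ω : ℕ → α | ∀ i : Fin n, ω i = b i} ∩ {ω | ∀ i : Fin m, ω i = c i}).Nonempty →
      {ω : ℕ → α | ∀ i : Fin n, ω i = b i} ∩ {ω | ∀ i : Fin m, ω i = c i}
        = {ω | ∀ i : Fin m, ω i = c i} by
    rintro _ ⟨n, b, rfl⟩ _ ⟨m, c, rfl⟩ hne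
    rcases le_total n m with hnm | hmn
    · exact ⟨m, c, key n m b c hnm hne⟩
    · rw [Set.inter_comm] at hne ⊢
      exact ⟨n, b, key m n c b hmn hne⟩
  rintro n m b c hnm ⟨ω, hωb, hωc⟩
  refine Set.inter_eq_right.2 fun ω' hω' i => ?_
  have hi : (i : ℕ) < m := i.2.trans_le hnm
  rw [← hωb i, hω' ⟨i, hi⟩, ← hωc ⟨i, hi⟩]

variable [MeasurableSpace α]

theorem measurableSet_of_mem_initialCylinders [MeasurableSingletonClass α] {S : Set (ℕ → α)}
    (hS : S ∈ initialCylinders α) : MeasurableSet S := by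
  obtain ⟨n, b, rfl⟩ := hS
  simp only [Set.ofPred_forall]
  exact .iInter fun i => (measurableSet_singleton (b i)).preimage (measurable_pi_apply (i : ℕ))

theorem generateFrom_initialCylinders [Countable α] [MeasurableSingletonClass α] :
    MeasurableSpace.generateFrom (initialCylinders α) = MeasurableSpace.pi := by
  refine le_antisymm
    (MeasurableSpace.generateFrom_le fun _ => measurableSet_of_mem_initialCylinders) ?_
  refine iSup_le fun i => (measurable_iff_comap_le.1 ?_)
  refine @measurable_to_countable' _ _ _ _ (MeasurableSpace.generateFrom _) _ fun a => ?_
  -- `ω i` is read off the initial segment of length `i + 1`, which ranges over a countable set.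
  have : (fun ω : ℕ → α => ω i) ⁻¹' {a} = ⋃ b : {b : Fin (i + 1) → α // b (Fin.last i) = a},
      {ω | ∀ k : Fin (i + 1), ω k = b.1 k} := by
    ext ω
    simp only [Set.mem_preimage, Set.mem_singleton_iff, Set.mem_iUnion, Set.mem_ofPred_eq]
    refine ⟨fun h => ⟨⟨fun k => ω k, h⟩, fun k => rfl⟩, fun ⟨b, hb⟩ => ?_⟩
    rw [← b.2, ← hb]
    rfl
  rw [this]
  exact .iUnion fun b => MeasurableSpace.measurableSet_generateFrom ⟨i + 1, b.1, rfl⟩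

theorem Measure.ext_of_initialCylinders [Countable α] [MeasurableSingletonClass α]
    {μ ν : Measure (ℕ → α)} [IsFiniteMeasure μ]
    (h : ∀ n (b : Fin n → α),
      μ {ω | ∀ i : Fin n, ω i = b i} = ν {ω | ∀ i : Fin n, ω i = b i}) :
    μ = ν :=
  ext_of_generate_finite _ generateFrom_initialCylinders.symm isPiSystem_initialCylinders
    (by rintro _ ⟨n, b, rfl⟩; exact h n b) (by simpa using h 0 Fin.elim0)

end MeasureTheory

namespace ProbabilityTheory

theorem infinitePi_bernoulliMeasure_initialCylinder (r : ℕ → I) (n : ℕ) (b : Fin n → Bool) :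
    infinitePi (fun i => Ber(true, false, r i)) {ω | ∀ i : Fin n, ω i = b i}
      = ∏ i : Fin n, ENNReal.ofReal (if b i then r i else 1 - r i) := by
  have hpi : {ω : ℕ → Bool | ∀ i : Fin n, ω i = b i}
      = Set.pi ↑(Finset.range n) fun i => {x | ∀ h : i < n, x = b ⟨i, h⟩} := by
    ext ω
    simp [Fin.forall_iff]
  rw [hpi, infinitePi_pi _ fun i _ => .of_discrete, Finset.prod_range]
  refine Finset.prod_congr rfl fun i _ => ?_
  have : {x | ∀ h : (i : ℕ) < n, x = b ⟨i, h⟩} = {b i} := by ext; simp [i.2]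
  rw [this]
  cases b i <;>
    simp [← coe_symm_eq, ← ENNReal.ofReal_coe_nnreal]

theorem eq_infinitePi_bernoulliMeasure {μ : Measure (ℕ → Bool)} [IsFiniteMeasure μ] (r : ℕ → I)
    (h : ∀ n (b : Fin n → Bool), μ {ω | ∀ i : Fin n, ω i = b i}
      = ∏ i : Fin n, ENNReal.ofReal (if b i then r i else 1 - r i)) :
    μ = infinitePi (fun i => Ber(true, false, r i)) :=
  ext_of_initialCylinders fun n b => by
    rw [h, infinitePi_bernoulliMeasure_initialCylinder]

noncomputable def frequency (ω : ℕ → Bool) (idx : ℕ → ℕ) (n : ℕ) : ℝ :=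
  (∑ k ∈ Finset.range n, ((ω (idx k)).toNat : ℝ)) / n

theorem measurable_frequency (idx : ℕ → ℕ) (n : ℕ) : Measurable fun ω => frequency ω idx n :=
  .div_const (Finset.measurable_sum _ fun k _ =>
    (measurable_of_countable (fun b : Bool => (b.toNat : ℝ))).comp (measurable_pi_apply (idx k))) _

theorem ae_tendsto_frequency_infinitePi_bernoulliMeasure (r : ℕ → I) {idx : ℕ → ℕ}
    (hidx : idx.Injective) {ρ : I} (hρ : ∀ k, r (idx k) = ρ) :
    ∀ᵐ ω ∂infinitePi (fun i => Ber(true, false, r i)),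
      Tendsto (frequency ω idx) atTop (𝓝 ρ) := by
  unfold frequency
  set P := infinitePi (fun i => Ber(true, false, r i))
  set f : Bool → ℝ := fun b => b.toNat
  have hf : Measurable f := measurable_of_countable f
  have hlaw : ∀ k, P.map (fun ω => ω (idx k)) = Ber(true, false, ρ) := fun k => by
    rw [infinitePi_map_eval, hρ]
  have hident : ∀ k, IdentDistrib (fun ω => f (ω (idx k))) (fun ω => f (ω (idx 0))) P P :=
    fun k => IdentDistrib.comp (u := f) ⟨(measurable_pi_apply _).aemeasurable,
      (measurable_pi_apply _).aemeasurable, by rw [hlaw, hlaw]⟩ hf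
  have hindep : iIndepFun (fun i ω => f (ω i)) P := iIndepFun_infinitePi fun _ => hf
  have hmean : P[fun ω => f (ω (idx 0))] = (ρ : ℝ) := by
    rw [← integral_map (φ := fun ω : ℕ → Bool => ω (idx 0)) (measurable_pi_apply _).aemeasurable
      hf.aestronglyMeasurable, hlaw, integral_bernoulliMeasure]
    simp [f]
  have hint : Integrable (fun ω => f (ω (idx 0))) P := by
    have : Integrable f (P.map fun ω => ω (idx 0)) := by
      rw [hlaw]; exact integrable_bernoulliMeasure _ _ _ f
    exact this.comp_measurable (measurable_pi_apply _)
  have hpair : Pairwise fun k l => IndepFun (fun ω => f (ω (idx k))) (fun ω => f (ω (idx l))) P :=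
    fun k l hkl => hindep.indepFun (hidx.ne hkl)
  simpa only [hmean] using strong_law_ae_real (μ := P) _ hint hpair hident

end ProbabilityTheory

open scoped Classical in
theorem decide_tendsto_nhds_eq {f : ℕ → ℝ} {p q : ℝ} (hpq : p ≠ q) (b : Bool)
    (hf : Tendsto f atTop (𝓝 (if b then p else q))) :
    decide (Tendsto f atTop (𝓝 p)) = b := by
  cases b
  · simpa using fun hp => hpq (tendsto_nhds_unique hp hf)
  · simpa using hf

theorem stmt_8 (L : ℕ) (hL : 1 ≤ L) (p q : ℝ)
    (hp0 : 0 ≤ p) (hp1 : p ≤ 1) (hq0 : 0 ≤ q) (hq1 : q ≤ 1) (hpq : p ≠ q)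
    (μ : (Fin L → Bool) → Measure (ℕ → Bool))
    [∀ θ, IsProbabilityMeasure (μ θ)]
    -- μ θ is the product measure whose n-th coordinate is an independent Bernoulli
    -- with success probability p if θ (n mod L) = true and q otherwise:
    -- every finite cylinder has the corresponding product probability.
    (hcyl : ∀ (θ : Fin L → Bool) (n : ℕ) (b : Fin n → Bool),
      μ θ {ω | ∀ i : Fin n, ω i = b i}
        = ∏ i : Fin n,
            ENNReal.ofReal
              (if b i
                then (if θ ⟨(i : ℕ) % L, Nat.mod_lt _ hL⟩ then p else q)
                else 1 - (if θ ⟨(i : ℕ) % L, Nat.mod_lt _ hL⟩ then p else q))) :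
    ∃ D : (ℕ → Bool) → (Fin L → Bool), Measurable D ∧
      ∀ θ : Fin L → Bool, μ θ {ω | D ω = θ} = 1 := by
  classical
  let D (ω : ℕ → Bool) (j : Fin L) : Bool :=
    decide (Tendsto (frequency ω fun k => j + k * L) atTop (𝓝 p))
  have hD : Measurable D := measurable_pi_iff.2 fun j => measurable_to_bool <| by
    convert measurableSet_tendsto (l := atTop) (𝓝 p) (measurable_frequency fun k => j + k * L)
    ext; simp [D]
  refine ⟨D, hD, fun θ => ?_⟩
  let r (i : ℕ) : I := if θ ⟨i % L, Nat.mod_lt _ hL⟩ then ⟨p, hp0, hp1⟩ else ⟨q, hq0, hq1⟩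
  have hμ : μ θ = infinitePi fun i => Ber(true, false, r i) :=
    eq_infinitePi_bernoulliMeasure r fun n b => by
      simp only [hcyl θ, r, apply_ite Subtype.val]
  have hbit (j : Fin L) : ∀ᵐ ω ∂μ θ, D ω j = θ j := by
    have hidx : (fun k => (j : ℕ) + k * L).Injective := fun k l h => by
      simpa [Nat.one_le_iff_ne_zero.1 hL] using h
    have hr (k : ℕ) : r (j + k * L) = r j := by simp [r]
    rw [hμ]
    filter_upwards [ae_tendsto_frequency_infinitePi_bernoulliMeasure r hidx hr] with ω hω
    refine decide_tendsto_nhds_eq hpq (θ j) ?_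
    simpa [r, Nat.mod_eq_of_lt j.2, apply_ite Subtype.val] using hω
  exact (mem_ae_iff_prob_eq_one (hD (measurableSet_singleton θ))).1 <| by
    filter_upwards [ae_all_iff.2 hbit] with ω hω using funext hω
end
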